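/- arXiv:2601.01465 — 5 statements merged into one kernel-verified Lean document; each statement's English description precedes it below -/
import Mathlib

section
/- Let X be an integrable random vector with values in ℝ^d, constructed as X = f(Y, U) for a measurable function f, where Y is a random variable and U is independent of Y. Let X' = f(Y, U') where U' is an independent copy of U, also independent of Y (so X and X' are conditionally i.i.d. given Y). Then E[‖X − E[X | Y]‖] ≤ E[‖X − X'‖]. -/
/-!
Write `g y := E[f(y, U)]`. By independence, `E[X | Y] = g(Y)`, and since `U'` is a copy of `U`
independent of `(Y, U)`, also `E[X' | Y, U] = g(Y)`. As `X` is `(Y, U)`-measurable, this gives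
`X - E[X | Y] = E[X - X' | Y, U]`, and conditional expectation contracts the `L¹` norm.
-/

open MeasureTheory ProbabilityTheory

section

variable {Ω α β E : Type*} {mΩ : MeasurableSpace Ω} {μ : Measure Ω} [IsFiniteMeasure μ]
  [NormedAddCommGroup E] [NormedSpace ℝ E] [CompleteSpace E]

theorem ProbabilityTheory.IndepFun.condExp_prod_ae_eq_integral_map
    [MeasurableSpace α] [MeasurableSpace β] {Z : Ω → α} {W : Ω → β}
    (hind : IndepFun Z W μ) (hZ : Measurable Z) (hW : Measurable W)
    {φ : α × β → E} (hφ : StronglyMeasurable φ) (hint : Integrable (fun ω => φ (Z ω, W ω)) μ) :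
    μ[fun ω => φ (Z ω, W ω) | MeasurableSpace.comap Z inferInstance]
      =ᵐ[μ] fun ω => ∫ w, φ (Z ω, w) ∂(μ.map W) := by
  have hZW : Measurable fun ω => (Z ω, W ω) := hZ.prodMk hW
  have hmap : μ.map (fun ω => (Z ω, W ω)) = (μ.map Z).prod (μ.map W) :=
    (indepFun_iff_map_prod_eq_prod_map_map hZ.aemeasurable hW.aemeasurable).mp hind
  have hφint : Integrable φ ((μ.map Z).prod (μ.map W)) := by
    rwa [← hmap, integrable_map_measure hφ.aestronglyMeasurable hZW.aemeasurable]
  have hg : StronglyMeasurable fun z => ∫ w, φ (z, w) ∂(μ.map W) := hφ.integral_prod_right'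
  have hgZint : Integrable (fun ω => ∫ w, φ (Z ω, w) ∂(μ.map W)) μ :=
    (integrable_map_measure hg.aestronglyMeasurable hZ.aemeasurable).mp hφint.integral_prod_left
  refine (ae_eq_condExp_of_forall_setIntegral_eq hZ.comap_le hint
    (fun s _ _ => hgZint.integrableOn) ?_
    (hg.comp_measurable (comap_measurable Z)).aestronglyMeasurable).symm
  rintro _ ⟨t, ht, rfl⟩ -
  have hpre : (fun ω => (Z ω, W ω)) ⁻¹' (t ×ˢ Set.univ) = Z ⁻¹' t := by
    ext ω; simp
  calc ∫ ω in Z ⁻¹' t, ∫ w, φ (Z ω, w) ∂(μ.map W) ∂μ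
      = ∫ z in t, ∫ w, φ (z, w) ∂(μ.map W) ∂(μ.map Z) :=
        (setIntegral_map ht hg.aestronglyMeasurable hZ.aemeasurable).symm
    _ = ∫ p in t ×ˢ Set.univ, φ p ∂((μ.map Z).prod (μ.map W)) := by
        rw [← Measure.restrict_prod_eq_prod_univ]
        refine (integral_prod φ ?_).symm
        rw [Measure.restrict_prod_eq_prod_univ]
        exact hφint.restrict
    _ = ∫ ω in Z ⁻¹' t, φ (Z ω, W ω) ∂μ := by
        rw [← hmap, setIntegral_map (ht.prod MeasurableSet.univ) hφ.aestronglyMeasurable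
          hZW.aemeasurable, hpre]

theorem integral_norm_sub_condExp_le_of_stronglyMeasurable {m : MeasurableSpace Ω}
    (hm : m ≤ mΩ) {X X' : Ω → E} (hXm : StronglyMeasurable[m] X) (hX : Integrable X μ)
    (hX' : Integrable X' μ) :
    ∫ ω, ‖X ω - μ[X' | m] ω‖ ∂μ ≤ ∫ ω, ‖X ω - X' ω‖ ∂μ := by
  have : SigmaFinite (μ.trim hm) := by
    have := isFiniteMeasure_trim (μ := μ) hm
    infer_instance
  have hcond : μ[X - X' | m] =ᵐ[μ] X - μ[X' | m] := by
    simpa only [condExp_of_stronglyMeasurable hm hXm hX] using condExp_sub hX hX' m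
  calc ∫ ω, ‖X ω - μ[X' | m] ω‖ ∂μ = ∫ ω, ‖μ[X - X' | m] ω‖ ∂μ :=
        integral_congr_ae (by filter_upwards [hcond] with ω h; rw [h, Pi.sub_apply])
    _ ≤ ∫ ω, ‖X ω - X' ω‖ ∂μ := integral_norm_condExp_le _

end

/-- If `X = f(Y, U)` with `U` independent of `Y`, and `X' = f(Y, U')` where `U'` is an
independent copy of `U` (independent of `(Y, U)` jointly), so that `X` and `X'` are
conditionally i.i.d. given `Y`, then `E[‖X − E[X | Y]‖] ≤ E[‖X − X'‖]`. -/
theorem expected_distance_to_center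
    {d : ℕ} {Ω 𝒴 𝒰 : Type*} [MeasureSpace Ω] [IsProbabilityMeasure (ℙ : Measure Ω)]
    [MeasurableSpace 𝒴] [MeasurableSpace 𝒰]
    (Y : Ω → 𝒴) (U U' : Ω → 𝒰) (f : 𝒴 × 𝒰 → EuclideanSpace ℝ (Fin d))
    (hY : Measurable Y) (hU : Measurable U) (hU' : Measurable U') (hf : Measurable f)
    (X X' : Ω → EuclideanSpace ℝ (Fin d))
    (hX : X = fun ω => f (Y ω, U ω)) (hX' : X' = fun ω => f (Y ω, U' ω))
    (hYU : IndepFun Y U ℙ)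
    (hU'indep : IndepFun (fun ω => (Y ω, U ω)) U' ℙ)
    (hcopy : Measure.map U' ℙ = Measure.map U ℙ)
    (hXint : Integrable X ℙ) (hX'int : Integrable X' ℙ) :
    ∫ ω, ‖X ω - (ℙ[X | MeasurableSpace.comap Y inferInstance]) ω‖ ∂ℙ
      ≤ ∫ ω, ‖X ω - X' ω‖ ∂ℙ := by
  subst hX hX'
  have hYU_meas : Measurable fun ω => (Y ω, U ω) := hY.prodMk hU
  have hcondY := hYU.condExp_prod_ae_eq_integral_map hY hU hf.stronglyMeasurable hXint
  have hcondYU := hU'indep.condExp_prod_ae_eq_integral_map hYU_meas hU'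
    (φ := fun p => f (p.1.1, p.2))
    (hf.comp (measurable_fst.fst.prodMk measurable_snd)).stronglyMeasurable hX'int
  rw [hcopy] at hcondYU
  calc ∫ ω, ‖f (Y ω, U ω) - ℙ[fun ω => f (Y ω, U ω) | MeasurableSpace.comap Y inferInstance] ω‖
      = ∫ ω, ‖f (Y ω, U ω) - ℙ[fun ω => f (Y ω, U' ω) |
          MeasurableSpace.comap (fun ω => (Y ω, U ω)) inferInstance] ω‖ :=
        integral_congr_ae (by filter_upwards [hcondY, hcondYU] with ω h h'; rw [h, h'])
    _ ≤ ∫ ω, ‖f (Y ω, U ω) - f (Y ω, U' ω)‖ :=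
        integral_norm_sub_condExp_le_of_stronglyMeasurable hYU_meas.comap_le
          (hf.stronglyMeasurable.comp_measurable (comap_measurable _)) hXint hX'int
end

section
/- Let f : ℝ^d → ℝ be nonnegative, differentiable, and β-smooth, i.e. ‖∇f(w) − ∇f(w')‖ ≤ β‖w − w'‖ for all w, w' ∈ ℝ^d, where β > 0. Then for every γ > 0 and every w, g ∈ ℝ^d, |f(w + g) − f(w)| ≤ (β/γ) · f(w) + ((β + γ)/2) · ‖g‖². -/
/-!
The quadratic Taylor bound `|f (x + v) - f x - ⟪∇f x, v⟫| ≤ β/2 ‖v‖²` of a `β`-smooth function,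
applied to the gradient step `v = -β⁻¹ ∇f x`, turns `f ≥ 0` into `‖∇f x‖² ≤ 2β f x`. The
first-order term `⟪∇f w, g⟫` is then split by Young's inequality
`‖∇f w‖ ‖g‖ ≤ ‖∇f w‖² / (2γ) + γ/2 ‖g‖²`.
-/

section Descent

variable {E F : Type*} [NormedAddCommGroup E] [NormedSpace ℝ E]
  [NormedAddCommGroup F] [NormedSpace ℝ F]

theorem norm_image_sub_sub_fderiv_le_of_lipschitz_fderiv {f : E → F} {β : ℝ}
    (hf : Differentiable ℝ f) (hf' : ∀ x y, ‖fderiv ℝ f x - fderiv ℝ f y‖ ≤ β * ‖x - y‖)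
    (x v : E) : ‖f (x + v) - f x - fderiv ℝ f x v‖ ≤ β / 2 * ‖v‖ ^ 2 := by
  -- Fencing on `[0, 1]`: the derivative of `t ↦ f (x + t • v) - f x - t • f' x v` has norm
  -- at most `β ‖v‖² t`, the derivative of the barrier `β/2 ‖v‖² t²`.
  have hφ : ∀ t, HasDerivAt (fun t : ℝ => f (x + t • v) - f x - t • fderiv ℝ f x v)
      (fderiv ℝ f (x + t • v) v - fderiv ℝ f x v) t := fun t => by
    have hline : HasDerivAt (fun t : ℝ => x + t • v) v t := by
      simpa using ((hasDerivAt_id t).smul_const v).const_add x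
    exact (((hf _).hasFDerivAt.comp_hasDerivAt t hline).sub_const (f x)).sub
      (by simpa using (hasDerivAt_id t).smul_const (fderiv ℝ f x v))
  have hB : ∀ t : ℝ, HasDerivAt (fun t => β / 2 * ‖v‖ ^ 2 * t ^ 2) (β * ‖v‖ ^ 2 * t) t :=
    fun t => ((hasDerivAt_pow 2 t).const_mul (β / 2 * ‖v‖ ^ 2)).congr_deriv (by norm_num; ring)
  have hφ' : ∀ t ∈ Set.Ico (0 : ℝ) 1,
      ‖fderiv ℝ f (x + t • v) v - fderiv ℝ f x v‖ ≤ β * ‖v‖ ^ 2 * t := by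
    intro t ht
    calc ‖fderiv ℝ f (x + t • v) v - fderiv ℝ f x v‖
        = ‖(fderiv ℝ f (x + t • v) - fderiv ℝ f x) v‖ := rfl
      _ ≤ ‖fderiv ℝ f (x + t • v) - fderiv ℝ f x‖ * ‖v‖ := ContinuousLinearMap.le_opNorm _ _
      _ ≤ β * ‖x + t • v - x‖ * ‖v‖ := by gcongr; exact hf' _ _
      _ = β * ‖v‖ ^ 2 * t := by
        rw [add_sub_cancel_left, norm_smul, Real.norm_of_nonneg ht.1]; ring
  simpa using image_norm_le_of_norm_deriv_right_le_deriv_boundary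
    (fun t _ => (hφ t).continuousAt.continuousWithinAt) (fun t _ => (hφ t).hasDerivWithinAt)
    (by simp) hB hφ' (Set.right_mem_Icc.2 zero_le_one)

end Descent

section Gradient

variable {F : Type*} [NormedAddCommGroup F] [InnerProductSpace ℝ F] [CompleteSpace F]

theorem norm_gradient_sub_gradient (f : F → ℝ) (x y : F) :
    ‖gradient f x - gradient f y‖ = ‖fderiv ℝ f x - fderiv ℝ f y‖ := by
  rw [gradient, gradient, ← map_sub, LinearIsometryEquiv.norm_map]

theorem abs_image_sub_sub_inner_gradient_le {f : F → ℝ} {β : ℝ} (hf : Differentiable ℝ f)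
    (hf' : ∀ x y, ‖gradient f x - gradient f y‖ ≤ β * ‖x - y‖) (x v : F) :
    |f (x + v) - f x - inner ℝ (gradient f x) v| ≤ β / 2 * ‖v‖ ^ 2 := by
  rw [inner_gradient_left, ← Real.norm_eq_abs]
  exact norm_image_sub_sub_fderiv_le_of_lipschitz_fderiv hf
    (fun x y => norm_gradient_sub_gradient f x y ▸ hf' x y) x v

theorem sq_norm_gradient_le_of_nonneg {f : F → ℝ} {β : ℝ} (hβ : 0 < β) (hf₀ : ∀ x, 0 ≤ f x)
    (hf : Differentiable ℝ f) (hf' : ∀ x y, ‖gradient f x - gradient f y‖ ≤ β * ‖x - y‖)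
    (x : F) : ‖gradient f x‖ ^ 2 ≤ 2 * β * f x := by
  have hstep := (abs_le.1 (abs_image_sub_sub_inner_gradient_le hf hf' x
    (-β⁻¹ • gradient f x))).2
  rw [inner_smul_right, real_inner_self_eq_norm_sq, norm_smul, mul_pow, Real.norm_eq_abs,
    sq_abs] at hstep
  have hscale : β / 2 * ((-β⁻¹) ^ 2 * ‖gradient f x‖ ^ 2) = β⁻¹ * ‖gradient f x‖ ^ 2 / 2 := by
    field_simp
  have hdrop : β⁻¹ * ‖gradient f x‖ ^ 2 ≤ 2 * f x := by
    linarith [hf₀ (x + -β⁻¹ • gradient f x)]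
  linarith [(inv_mul_le_iff₀ hβ).1 hdrop]

end Gradient

theorem mul_le_sq_div_add_mul_sq {γ : ℝ} (hγ : 0 < γ) (a b : ℝ) :
    a * b ≤ a ^ 2 / (2 * γ) + γ / 2 * b ^ 2 := by
  have hgap : a ^ 2 / (2 * γ) + γ / 2 * b ^ 2 - a * b = (a - γ * b) ^ 2 / (2 * γ) := by
    field_simp; ring
  rw [← sub_nonneg, hgap]
  positivity

/-- If `f : ℝ^d → ℝ` is nonnegative, differentiable and `β`-smooth, then for every `γ > 0`
and all `w, g`, `|f(w + g) − f(w)| ≤ (β/γ)·f(w) + ((β + γ)/2)·‖g‖²`. -/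
theorem perturbation_penalty_of_nonneg_smooth
    {d : ℕ} (f : EuclideanSpace ℝ (Fin d) → ℝ) (β : ℝ) (hβ : 0 < β)
    (hnonneg : ∀ w, 0 ≤ f w)
    (hdiff : Differentiable ℝ f)
    (hsmooth : ∀ w w' : EuclideanSpace ℝ (Fin d),
      ‖gradient f w - gradient f w'‖ ≤ β * ‖w - w'‖) :
    ∀ γ : ℝ, 0 < γ → ∀ w g : EuclideanSpace ℝ (Fin d),
      |f (w + g) - f w| ≤ (β / γ) * f w + ((β + γ) / 2) * ‖g‖ ^ 2 := by
  intro γ hγ w g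
  have htaylor := abs_image_sub_sub_inner_gradient_le hdiff hsmooth w g
  have hlinear : |inner ℝ (gradient f w) g| ≤ β / γ * f w + γ / 2 * ‖g‖ ^ 2 :=
    calc |inner ℝ (gradient f w) g| ≤ ‖gradient f w‖ * ‖g‖ := abs_real_inner_le_norm _ _
      _ ≤ ‖gradient f w‖ ^ 2 / (2 * γ) + γ / 2 * ‖g‖ ^ 2 := mul_le_sq_div_add_mul_sq hγ _ _
      _ ≤ 2 * β * f w / (2 * γ) + γ / 2 * ‖g‖ ^ 2 := by
        gcongr; exact sq_norm_gradient_le_of_nonneg hβ hnonneg hdiff hsmooth w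
      _ = β / γ * f w + γ / 2 * ‖g‖ ^ 2 := by field_simp
  calc |f (w + g) - f w|
      ≤ |f (w + g) - f w - inner ℝ (gradient f w) g| + |inner ℝ (gradient f w) g| := by
        linarith [abs_sub_abs_le_abs_sub (f (w + g) - f w) (inner ℝ (gradient f w) g)]
    _ ≤ β / γ * f w + ((β + γ) / 2) * ‖g‖ ^ 2 := by linarith
end

section
/- Let W = A(S, V) ∈ ℝ^d be the integrable output of a (possibly randomized) learning algorithm A applied to the training set S with internal randomness V independent of S. Assume that for every z ∈ Z the map w ↦ ℓ(w, z) is L-Lipschitz, and that all losses appearing below are integrable. Then gen ≤ (2L/n) · Σ_{i=1}^n E[‖W − E[W | Z_{−i}]‖], where Z_{−i} = (Z_1, …, Z_{i−1}, Z_{i+1}, …, Z_n) and E[W | Z_{−i}] is the conditional expectation of W given Z_{−i}. -/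
open MeasureTheory ProbabilityTheory
open scoped NNReal

/-!
For each `i`, the leave-one-out prediction `Wᵢ = E[W | Z₋ᵢ]` is a function of the other samples,
hence independent of `Zᵢ`; so the expected loss of `Wᵢ` at `Zᵢ` equals its expected population
loss. Replacing `W` by `Wᵢ` in the population loss and in the `i`-th empirical loss costs at most
`L · E‖W - Wᵢ‖` each, by the Lipschitz property, and averaging over `i` gives the bound.
-/

section Lipschitz

variable {Ω E F : Type*} [MeasurableSpace Ω] {P : Measure Ω}
  [NormedAddCommGroup E] [NormedAddCommGroup F] {g : Ω → E → F} {L : ℝ≥0} {X Y : Ω → E}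

lemma lipschitzWith_integral {α : Type*} [MeasurableSpace α] [NormedSpace ℝ F]
    {μ : Measure α} [IsProbabilityMeasure μ] {f : E → α → F}
    (hf : ∀ a, LipschitzWith L (fun w => f w a)) (hint : ∀ w, Integrable (f w) μ) :
    LipschitzWith L (fun w => ∫ a, f w a ∂μ) := by
  refine LipschitzWith.of_dist_le_mul fun w w' => ?_
  rw [dist_eq_norm, ← integral_sub (hint w) (hint w')]
  simpa using norm_integral_le_of_norm_le_const (μ := μ)
    (Filter.Eventually.of_forall fun a => by
      simpa only [dist_eq_norm] using (hf a).dist_le_mul w w')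

lemma MeasureTheory.Integrable.of_lipschitzWith_comp (hg : ∀ ω, LipschitzWith L (g ω))
    (hX : Integrable (fun ω => g ω (X ω)) P) (hY : AEStronglyMeasurable (fun ω => g ω (Y ω)) P)
    (hXY : Integrable (X - Y) P) : Integrable (fun ω => g ω (Y ω)) P :=
  (hX.norm.add (hXY.norm.const_mul L)).mono' hY <| Filter.Eventually.of_forall fun ω => by
    calc ‖g ω (Y ω)‖ ≤ ‖g ω (X ω)‖ + ‖g ω (Y ω) - g ω (X ω)‖ := norm_le_insert' _ _
      _ ≤ ‖g ω (X ω)‖ + L * ‖(X - Y) ω‖ := by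
        gcongr
        have h := (hg ω).dist_le_mul (Y ω) (X ω)
        rwa [dist_comm (Y ω), dist_eq_norm, dist_eq_norm] at h

lemma norm_integral_sub_integral_le_of_lipschitzWith [NormedSpace ℝ F]
    (hg : ∀ ω, LipschitzWith L (g ω)) (hX : Integrable (fun ω => g ω (X ω)) P)
    (hY : Integrable (fun ω => g ω (Y ω)) P) (hXY : Integrable (X - Y) P) :
    ‖∫ ω, g ω (X ω) ∂P - ∫ ω, g ω (Y ω) ∂P‖ ≤ L * ∫ ω, ‖X ω - Y ω‖ ∂P := by
  rw [← integral_sub hX hY, ← integral_const_mul]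
  exact norm_integral_le_of_norm_le (hXY.norm.const_mul L) <| Filter.Eventually.of_forall
    fun ω => by simpa only [dist_eq_norm] using (hg ω).dist_le_mul (X ω) (Y ω)

end Lipschitz

lemma ProbabilityTheory.IndepFun.integral_comp_eq_integral_integral {Ω α β F : Type*}
    [MeasurableSpace Ω] [MeasurableSpace α] [MeasurableSpace β]
    [NormedAddCommGroup F] [NormedSpace ℝ F]
    {P : Measure Ω} [IsFiniteMeasure P] {μ : Measure β} {X : Ω → α} {Y : Ω → β}
    (hXY : IndepFun X Y P) (hX : AEMeasurable X P) (hY : AEMeasurable Y P) (hlaw : P.map Y = μ)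
    {f : α → β → F} (hf : StronglyMeasurable (Function.uncurry f))
    (hint : Integrable (fun ω => f (X ω) (Y ω)) P) :
    ∫ ω, f (X ω) (Y ω) ∂P = ∫ ω, ∫ b, f (X ω) b ∂μ ∂P := by
  subst hlaw
  have hmap : P.map (fun ω => (X ω, Y ω)) = (P.map X).prod (P.map Y) :=
    (indepFun_iff_map_prod_eq_prod_map_map hX hY).mp hXY
  have hXY' : AEMeasurable (fun ω => (X ω, Y ω)) P := hX.prodMk hY
  have hpush : ∫ ω, f (X ω) (Y ω) ∂P = ∫ p, Function.uncurry f p ∂P.map (fun ω => (X ω, Y ω)) :=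
    (integral_map hXY' hf.aestronglyMeasurable).symm
  rw [hpush, hmap,
    integral_prod _ (hmap ▸ (integrable_map_measure hf.aestronglyMeasurable hXY').mpr hint),
    integral_map hX hf.integral_prod_right'.aestronglyMeasurable]
  rfl

lemma integral_integral_sub_integral_le_of_indepFun {Ω E 𝒵 : Type*} [MeasurableSpace Ω]
    {P : Measure Ω} [IsFiniteMeasure P] [NormedAddCommGroup E] [MeasurableSpace E]
    [BorelSpace E] [MeasurableSpace 𝒵] {μ : Measure 𝒵} [IsProbabilityMeasure μ]
    {ℓ : E → 𝒵 → ℝ} {L : ℝ≥0} (hℓ : Measurable (Function.uncurry ℓ))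
    (hLip : ∀ z, LipschitzWith L (fun w => ℓ w z)) (hℓint : ∀ w, Integrable (ℓ w) μ)
    {W Y : Ω → E} {Z : Ω → 𝒵} (hW : Integrable W P) (hY : Integrable Y P) (hZ : Measurable Z)
    (hYZ : IndepFun Y Z P) (hlaw : P.map Z = μ)
    (hemp : Integrable (fun ω => ℓ (W ω) (Z ω)) P)
    (hpop : Integrable (fun ω => ∫ z, ℓ (W ω) z ∂μ) P) :
    ∫ ω, ∫ z, ℓ (W ω) z ∂μ ∂P - ∫ ω, ℓ (W ω) (Z ω) ∂P ≤ 2 * L * ∫ ω, ‖W ω - Y ω‖ ∂P := by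
  have hWY : Integrable (W - Y) P := hW.sub hY
  have hpopLip := lipschitzWith_integral hLip hℓint
  have hpopY : Integrable (fun ω => ∫ z, ℓ (Y ω) z ∂μ) P :=
    hpop.of_lipschitzWith_comp (g := fun _ w => ∫ z, ℓ w z ∂μ) (fun _ => hpopLip)
      (hpopLip.continuous.measurable.comp_aemeasurable hY.aemeasurable).aestronglyMeasurable hWY
  have hempY : Integrable (fun ω => ℓ (Y ω) (Z ω)) P :=
    hemp.of_lipschitzWith_comp (g := fun ω w => ℓ w (Z ω)) (fun ω => hLip (Z ω))
      (hℓ.comp_aemeasurable (hY.aemeasurable.prodMk hZ.aemeasurable)).aestronglyMeasurable hWY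
  have hpop_le := norm_integral_sub_integral_le_of_lipschitzWith
    (g := fun _ w => ∫ z, ℓ w z ∂μ) (fun _ => hpopLip) hpop hpopY hWY
  have hemp_le := norm_integral_sub_integral_le_of_lipschitzWith (g := fun ω w => ℓ w (Z ω))
    (fun ω => hLip (Z ω)) hemp hempY hWY
  rw [Real.norm_eq_abs] at hpop_le hemp_le
  have hdecouple : ∫ ω, ℓ (Y ω) (Z ω) ∂P = ∫ ω, ∫ z, ℓ (Y ω) z ∂μ ∂P :=
    hYZ.integral_comp_eq_integral_integral hY.aemeasurable hZ.aemeasurable hlaw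
      hℓ.stronglyMeasurable hempY
  linarith [(abs_le.mp hpop_le).2, (abs_le.mp hemp_le).1]

section LeaveOneOut

variable {Ω ι 𝒵 : Type*} [MeasurableSpace Ω] {P : Measure Ω} [MeasurableSpace 𝒵]
  {Z : ι → Ω → 𝒵}

lemma ProbabilityTheory.iIndepFun.indep_comap_ne (hZ : ∀ i, Measurable (Z i))
    (hind : iIndepFun Z P) (i : ι) :
    Indep (MeasurableSpace.comap (fun ω (j : {j // j ≠ i}) => Z j.1 ω) inferInstance)
      (MeasurableSpace.comap (Z i) inferInstance) P := by
  have hcompl : MeasurableSpace.comap (fun ω (j : {j // j ≠ i}) => Z j.1 ω) inferInstance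
      = ⨆ j ∈ ({i}ᶜ : Set ι), MeasurableSpace.comap (Z j) inferInstance := by
    simp only [MeasurableSpace.pi, MeasurableSpace.comap_iSup, MeasurableSpace.comap_comp]
    rw [iSup_subtype]
    rfl
  rw [hcompl]
  simpa using (indep_biSup_compl (fun j => (hZ j).comap_le) hind.iIndep {i}).symm

lemma ProbabilityTheory.iIndepFun.indepFun_condExp_comap_ne {E : Type*} [NormedAddCommGroup E]
    [NormedSpace ℝ E] [MeasurableSpace E] [BorelSpace E]
    (hZ : ∀ i, Measurable (Z i)) (hind : iIndepFun Z P) (W : Ω → E) (i : ι) :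
    IndepFun (P[W | MeasurableSpace.comap (fun ω (j : {j // j ≠ i}) => Z j.1 ω) inferInstance])
      (Z i) P :=
  indep_of_indep_of_le_left (hind.indep_comap_ne hZ i)
    stronglyMeasurable_condExp.measurable.comap_le

end LeaveOneOut

theorem gen_le_conditional_stability_general
    {d n : ℕ} (hn : 0 < n) {Ω 𝒵 : Type*}
    [MeasureSpace Ω] [IsProbabilityMeasure (ℙ : Measure Ω)]
    [MeasurableSpace 𝒵]
    (μ : Measure 𝒵) [IsProbabilityMeasure μ]
    (Z : Fin n → Ω → 𝒵) (hZmeas : ∀ i, Measurable (Z i))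
    (hiid : iIndepFun Z ℙ)
    (hlaw : ∀ i, Measure.map (Z i) ℙ = μ)
    (W : Ω → EuclideanSpace ℝ (Fin d))
    (hWint : Integrable W ℙ)
    (ℓ : EuclideanSpace ℝ (Fin d) → 𝒵 → ℝ) (L : ℝ≥0)
    (hℓmeas : Measurable (fun p : EuclideanSpace ℝ (Fin d) × 𝒵 => ℓ p.1 p.2))
    (hLip : ∀ z, LipschitzWith L (fun w => ℓ w z))
    (hint_emp : ∀ i, Integrable (fun ω => ℓ (W ω) (Z i ω)) ℙ)
    (hint_pop : Integrable (fun ω => ∫ z, ℓ (W ω) z ∂μ) ℙ)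
    (hint_loss : ∀ w, Integrable (fun z => ℓ w z) μ) :
    (∫ ω, ∫ z, ℓ (W ω) z ∂μ ∂ℙ) - (∫ ω, (n : ℝ)⁻¹ * ∑ i, ℓ (W ω) (Z i ω) ∂ℙ)
      ≤ (2 * (L : ℝ) / n) * ∑ i : Fin n,
          ∫ ω, ‖W ω -
            (ℙ[W | MeasurableSpace.comap
                (fun ω (j : {j : Fin n // j ≠ i}) => Z j.1 ω) inferInstance]) ω‖ ∂ℙ := by
  set Δ : Fin n → ℝ := fun i => ∫ ω, ‖W ω -
    (ℙ[W | MeasurableSpace.comap (fun ω (j : {j : Fin n // j ≠ i}) => Z j.1 ω) inferInstance]) ω‖ ∂ℙ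
  have hgap : ∀ i, ∫ ω, ∫ z, ℓ (W ω) z ∂μ ∂ℙ - ∫ ω, ℓ (W ω) (Z i ω) ∂ℙ ≤ 2 * L * Δ i :=
    fun i => integral_integral_sub_integral_le_of_indepFun hℓmeas hLip hint_loss hWint
      integrable_condExp (hZmeas i) (hiid.indepFun_condExp_comap_ne hZmeas W i) (hlaw i)
      (hint_emp i) hint_pop
  have hn' : (n : ℝ) ≠ 0 := by positivity
  calc ∫ ω, ∫ z, ℓ (W ω) z ∂μ ∂ℙ - ∫ ω, (n : ℝ)⁻¹ * ∑ i, ℓ (W ω) (Z i ω) ∂ℙ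
      = (n : ℝ)⁻¹ * ∑ i, (∫ ω, ∫ z, ℓ (W ω) z ∂μ ∂ℙ - ∫ ω, ℓ (W ω) (Z i ω) ∂ℙ) := by
        rw [integral_const_mul, integral_finsetSum _ fun i _ => hint_emp i, Finset.sum_sub_distrib]
        simp only [Finset.sum_const, Finset.card_univ, Fintype.card_fin, nsmul_eq_mul]
        field_simp
    _ ≤ (n : ℝ)⁻¹ * ∑ i, 2 * L * Δ i := by gcongr with i; exact hgap i
    _ = 2 * L / n * ∑ i, Δ i := by rw [← Finset.mul_sum]; ring

/-- Generalization bound via conditional expectations: if the loss `ℓ(·, z)` is `L`-Lipschitz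
for every `z` and `W = A(S, V)` is the integrable output of a (possibly randomized) algorithm
with internal randomness `V` independent of the i.i.d. sample `S = (Z_1, …, Z_n)`, then
`gen ≤ (2L/n) · Σ_i E[‖W − E[W | Z_{−i}]‖]`. -/
theorem gen_le_conditional_stability
    {d n : ℕ} (hn : 0 < n) {Ω 𝒵 𝒱 : Type*}
    [MeasureSpace Ω] [IsProbabilityMeasure (ℙ : Measure Ω)]
    [MeasurableSpace 𝒵] [StandardBorelSpace 𝒵] [MeasurableSpace 𝒱]
    (μ : Measure 𝒵) [IsProbabilityMeasure μ]
    (Z : Fin n → Ω → 𝒵) (hZmeas : ∀ i, Measurable (Z i))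
    (hiid : iIndepFun Z ℙ)
    (hlaw : ∀ i, Measure.map (Z i) ℙ = μ)
    (V : Ω → 𝒱) (hVmeas : Measurable V)
    (hVindep : IndepFun (fun ω => fun i => Z i ω) V ℙ)
    (A : (Fin n → 𝒵) → 𝒱 → EuclideanSpace ℝ (Fin d))
    (hA : Measurable (fun p : (Fin n → 𝒵) × 𝒱 => A p.1 p.2))
    (W : Ω → EuclideanSpace ℝ (Fin d))
    (hW : W = fun ω => A (fun i => Z i ω) (V ω))
    (hWint : Integrable W ℙ)
    (ℓ : EuclideanSpace ℝ (Fin d) → 𝒵 → ℝ) (L : ℝ≥0)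
    (hℓmeas : Measurable (fun p : EuclideanSpace ℝ (Fin d) × 𝒵 => ℓ p.1 p.2))
    (hLip : ∀ z, LipschitzWith L (fun w => ℓ w z))
    (hint_emp : ∀ i, Integrable (fun ω => ℓ (W ω) (Z i ω)) ℙ)
    (hint_pop : Integrable (fun ω => ∫ z, ℓ (W ω) z ∂μ) ℙ)
    (hint_loss : ∀ w, Integrable (fun z => ℓ w z) μ) :
    (∫ ω, ∫ z, ℓ (W ω) z ∂μ ∂ℙ) - (∫ ω, (n : ℝ)⁻¹ * ∑ i, ℓ (W ω) (Z i ω) ∂ℙ)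
      ≤ (2 * (L : ℝ) / n) * ∑ i : Fin n,
          ∫ ω, ‖W ω -
            (ℙ[W | MeasurableSpace.comap
                (fun ω (j : {j : Fin n // j ≠ i}) => Z j.1 ω) inferInstance]) ω‖ ∂ℙ :=
  gen_le_conditional_stability_general hn μ Z hZmeas hiid hlaw W hWint ℓ L hℓmeas hLip hint_emp
    hint_pop hint_loss
end

section
/- Let W = A(S, V) ∈ ℝ^d be the integrable output of a (possibly randomized) learning algorithm A applied to the training set S with internal randomness V independent of S. Let S' = (Z'_1, …, Z'_n) be an independent i.i.d. copy of S, and for each i let S^{(i)} denote S with its i-th sample Z_i replaced by Z'_i. Assume that for every z ∈ Z the map w ↦ ℓ(w, z) is L-Lipschitz, and that all losses appearing below are integrable. Then gen ≤ (2L/n) · Σ_{i=1}^n E[‖A(S, V) − A(S^{(i)}, V)‖]. -/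
/-!
Write `W = A(S, V)` and `Wᵢ = A(S⁽ⁱ⁾, V)`. Since `Z'ᵢ` is independent of `(S, V)` and has law `μ`,
the population loss `E[∫ ℓ(W, z) dμ]` equals the ghost-sample loss `E[ℓ(W, Z'ᵢ)]`. Exchanging `Zᵢ`
and `Z'ᵢ` preserves the joint law of `(S, S', V)`, so `E[ℓ(W, Zᵢ)] = E[ℓ(Wᵢ, Z'ᵢ)]`. Hence the
`i`-th term of the generalization gap is `E[ℓ(W, Z'ᵢ) - ℓ(Wᵢ, Z'ᵢ)] ≤ L E‖W - Wᵢ‖`, and averaging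
over `i` gives the bound, even with `L / n` in place of `2L / n`.

The pair `(S, S')` is handled as one i.i.d. family `G` indexed by `ι ⊕ ι`, so that the exchange
is the coordinate permutation `Equiv.swap (inl i) (inr i)`.
-/

open MeasureTheory ProbabilityTheory
open scoped NNReal

namespace MeasureTheory

theorem measurePreserving_prod_right_comm {α β γ : Type*} [MeasurableSpace α] [MeasurableSpace β]
    [MeasurableSpace γ] (μa : Measure α) (μb : Measure β) (μc : Measure γ) [SFinite μa]
    [SFinite μb] [SFinite μc] :
    MeasurePreserving (fun p : (α × β) × γ => ((p.1.1, p.2), p.1.2))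
      ((μa.prod μb).prod μc) ((μa.prod μc).prod μb) :=
  (measurePreserving_prodAssoc μa μc μb).symm.comp <|
    ((MeasurePreserving.id μa).prod Measure.measurePreserving_swap).comp
      (measurePreserving_prodAssoc μa μb μc)

theorem measurePreserving_comp_perm {ι α : Type*} [Fintype ι] [MeasurableSpace α]
    (μ : Measure α) [SigmaFinite μ] (τ : Equiv.Perm ι) :
    MeasurePreserving (fun g : ι → α => g ∘ τ) (Measure.pi fun _ => μ)
      (Measure.pi fun _ => μ) := by
  convert measurePreserving_piCongrLeft (fun _ : ι => μ) τ.symm using 1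
  ext g k
  simp [MeasurableEquiv.piCongrLeft, Equiv.piCongrLeft_apply_eq_cast]

end MeasureTheory

theorem comp_swap_inl_eq_update {ι α : Type*} [DecidableEq ι] (g : ι ⊕ ι → α) (i : ι) :
    (fun j => g (Equiv.swap (.inl i) (.inr i) (.inl j)))
      = Function.update (fun j => g (.inl j)) i (g (.inr i)) := by
  ext j
  rcases eq_or_ne j i with rfl | hj
  · simp
  · simp [hj, Equiv.swap_apply_of_ne_of_ne]

namespace ProbabilityTheory

variable {Ω α β γ : Type*} {mΩ : MeasurableSpace Ω} {P : Measure Ω}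
  [MeasurableSpace α] [MeasurableSpace β] [MeasurableSpace γ]

theorem HasLaw.integrable_comp_of_lipschitzWith {E : Type*} [NormedAddCommGroup E]
    [MeasurableSpace E] [BorelSpace E] {μ : Measure α} {ℓ : E → α → ℝ} {L : ℝ≥0}
    (hℓ : Measurable fun p : E × α => ℓ p.1 p.2) (hLip : ∀ z, LipschitzWith L (ℓ · z))
    (hℓ0 : Integrable (ℓ 0) μ) {f : Ω → E} {Y : Ω → α} (hf : Integrable f P) (hY : HasLaw Y μ P) :
    Integrable (fun ω => ℓ (f ω) (Y ω)) P := by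
  have h0 : Integrable (fun ω => ℓ 0 (Y ω)) P :=
    (hY.map_eq ▸ hℓ0).comp_aemeasurable hY.aemeasurable
  refine (h0.norm.add (hf.norm.const_mul L)).mono'
    (hℓ.comp_aemeasurable (hf.aemeasurable.prodMk hY.aemeasurable)).aestronglyMeasurable
    (.of_forall fun ω => ?_)
  calc ‖ℓ (f ω) (Y ω)‖ ≤ ‖ℓ 0 (Y ω)‖ + ‖ℓ (f ω) (Y ω) - ℓ 0 (Y ω)‖ :=
        norm_le_norm_add_norm_sub' _ _
    _ ≤ ‖ℓ 0 (Y ω)‖ + L * ‖f ω‖ := by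
        gcongr
        simpa using (hLip (Y ω)).norm_sub_le (f ω) 0

variable [IsFiniteMeasure P]

theorem IndepFun.prodMk_indepFun_of_indepFun_prodMk {X : Ω → α} {Y : Ω → β} {V : Ω → γ}
    (hX : Measurable X) (hY : Measurable Y) (hV : Measurable V) (hXY : X ⟂ᵢ[P] Y)
    (hXYV : (fun ω => (X ω, Y ω)) ⟂ᵢ[P] V) :
    (fun ω => (X ω, V ω)) ⟂ᵢ[P] Y := by
  have hX' : HasLaw X (P.map X) P := ⟨hX.aemeasurable, rfl⟩
  have hY' : HasLaw Y (P.map Y) P := ⟨hY.aemeasurable, rfl⟩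
  have hV' : HasLaw V (P.map V) P := ⟨hV.aemeasurable, rfl⟩
  have hXV : HasLaw (fun ω => (X ω, V ω)) ((P.map X).prod (P.map V)) P :=
    (hXYV.comp (measurable_fst (α := α) (β := β)) measurable_id).hasLaw_prod hX' hV'
  rw [indepFun_iff_hasLaw_prodMk_prod hXV hY']
  exact (measurePreserving_prod_right_comm _ _ _).comp_hasLaw
    (hXYV.hasLaw_prod (hXY.hasLaw_prod hX' hY') hV')

theorem IndepFun.integral_comp_prodMk {E : Type*} [NormedAddCommGroup E] [NormedSpace ℝ E]
    {X : Ω → α} {Y : Ω → β} {ν : Measure β} (hXY : X ⟂ᵢ[P] Y) (hX : Measurable X)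
    (hY : HasLaw Y ν P) {F : α × β → E} (hF : StronglyMeasurable F)
    (hint : Integrable (fun ω => F (X ω, Y ω)) P) :
    ∫ ω, F (X ω, Y ω) ∂P = ∫ ω, ∫ y, F (X ω, y) ∂ν ∂P := by
  have hX' : HasLaw X (P.map X) P := ⟨hX.aemeasurable, rfl⟩
  have : IsFiniteMeasure ν := hY.map_eq ▸ inferInstance
  have hXY' := hXY.hasLaw_prod hX' hY
  have hF_int : Integrable F ((P.map X).prod ν) := by
    rw [← hXY'.map_eq]
    exact (integrable_map_measure hF.aestronglyMeasurable hXY'.aemeasurable).mpr hint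
  calc ∫ ω, F (X ω, Y ω) ∂P = ∫ p, F p ∂((P.map X).prod ν) :=
        hXY'.integral_comp (f := F) hF.aestronglyMeasurable
    _ = ∫ x, ∫ y, F (x, y) ∂ν ∂(P.map X) := integral_prod F hF_int
    _ = ∫ ω, ∫ y, F (X ω, y) ∂ν ∂P :=
        (hX'.integral_comp hF.integral_prod_right'.aestronglyMeasurable).symm

theorem HasLaw.indepFun_comp_inl_comp_inr {ι ι' : Type*} [Fintype ι] [Fintype ι']
    {X : ι ⊕ ι' → Type*} [∀ k, MeasurableSpace (X k)] {μ : ∀ k, Measure (X k)}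
    [∀ k, IsProbabilityMeasure (μ k)] {G : Ω → ∀ k, X k} (hG : HasLaw G (Measure.pi μ) P) :
    (fun ω i => G ω (.inl i)) ⟂ᵢ[P] (fun ω j => G ω (.inr j)) := by
  have hpair := (measurePreserving_sumPiEquivProdPi μ).comp_hasLaw hG
  exact (indepFun_iff_hasLaw_prodMk_prod (measurePreserving_fst.comp_hasLaw hpair)
    (measurePreserving_snd.comp_hasLaw hpair)).2 hpair

theorem HasLaw.identDistrib_comp_perm_prodMk {ι : Type*} [Fintype ι] {μ : Measure α}
    [SigmaFinite μ] {G : Ω → ι → α} {V : Ω → γ} (hG : HasLaw G (Measure.pi fun _ => μ) P)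
    (hV : Measurable V) (hGV : G ⟂ᵢ[P] V) (τ : Equiv.Perm ι) :
    IdentDistrib (fun ω => (G ω, V ω)) (fun ω => (G ω ∘ τ, V ω)) P P :=
  IdentDistrib.prodMk (hG.identDistrib ((measurePreserving_comp_perm μ τ).comp_hasLaw hG))
    (IdentDistrib.refl hV.aemeasurable) hGV
    (hGV.comp (measurePreserving_comp_perm μ τ).measurable measurable_id)

section Stability

variable {ι 𝒵 𝒱 E : Type*} [Fintype ι] [DecidableEq ι] [MeasurableSpace 𝒵] [MeasurableSpace 𝒱]
  [NormedAddCommGroup E] [MeasurableSpace E] [BorelSpace E] {μ : Measure 𝒵}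
  [IsProbabilityMeasure μ] {G : Ω → ι ⊕ ι → 𝒵} {V : Ω → 𝒱} {A : (ι → 𝒵) → 𝒱 → E}
  {ℓ : E → 𝒵 → ℝ} {L : ℝ≥0}

theorem integral_population_loss_sub_integral_loss_le (hG : HasLaw G (Measure.pi fun _ => μ) P)
    (hGm : Measurable G) (hV : Measurable V) (hGV : G ⟂ᵢ[P] V)
    (hA : Measurable fun p : (ι → 𝒵) × 𝒱 => A p.1 p.2)
    (hW : Integrable (fun ω => A (fun j => G ω (.inl j)) (V ω)) P)
    (hℓ : Measurable fun p : E × 𝒵 => ℓ p.1 p.2) (hLip : ∀ z, LipschitzWith L (ℓ · z))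
    (hℓ0 : Integrable (ℓ 0) μ) (i : ι) :
    ∫ ω, ∫ z, ℓ (A (fun j => G ω (.inl j)) (V ω)) z ∂μ ∂P
        - ∫ ω, ℓ (A (fun j => G ω (.inl j)) (V ω)) (G ω (.inl i)) ∂P
      ≤ L * ∫ ω, ‖A (fun j => G ω (.inl j)) (V ω)
          - A (Function.update (fun j => G ω (.inl j)) i (G ω (.inr i))) (V ω)‖ ∂P := by
  set W : Ω → E := fun ω => A (fun j => G ω (.inl j)) (V ω)
  set Wᵢ : Ω → E := fun ω => A (Function.update (fun j => G ω (.inl j)) i (G ω (.inr i))) (V ω)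
  set Y : Ω → 𝒵 := fun ω => G ω (.inr i)
  change ∫ ω, ∫ z, ℓ (W ω) z ∂μ ∂P - ∫ ω, ℓ (W ω) (G ω (.inl i)) ∂P
    ≤ L * ∫ ω, ‖W ω - Wᵢ ω‖ ∂P
  have hSm : Measurable fun ω j => G ω (.inl j) := by fun_prop
  have hY : HasLaw Y μ P := (measurePreserving_eval _ (Sum.inr i)).comp_hasLaw hG
  have hswap := hG.identDistrib_comp_perm_prodMk hV hGV (Equiv.swap (.inl i) (.inr i))
  have hWᵢ : Integrable Wᵢ P := by
    have := hswap.comp (u := fun p => A (fun j => p.1 (.inl j)) p.2) (by fun_prop)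
    simpa only [Function.comp_def, comp_swap_inl_eq_update] using this.integrable_iff.mp hW
  have h_ghost : ∫ ω, ∫ z, ℓ (W ω) z ∂μ ∂P = ∫ ω, ℓ (W ω) (Y ω) ∂P := by
    have hSY : (fun ω j => G ω (.inl j)) ⟂ᵢ[P] Y :=
      hG.indepFun_comp_inl_comp_inr.comp measurable_id (measurable_pi_apply i)
    have hSYV : (fun ω => ((fun j => G ω (.inl j)), Y ω)) ⟂ᵢ[P] V :=
      hGV.comp (φ := fun g => ((fun j => g (.inl j)), g (.inr i))) (by fun_prop) measurable_id
    exact ((IndepFun.prodMk_indepFun_of_indepFun_prodMk hSm (by fun_prop) hV hSY hSYV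
      ).integral_comp_prodMk (hSm.prodMk hV) hY (F := fun p => ℓ (A p.1.1 p.1.2) p.2)
      (hℓ.comp ((hA.comp measurable_fst).prodMk measurable_snd)).stronglyMeasurable
      (hY.integrable_comp_of_lipschitzWith hℓ hLip hℓ0 hW)).symm
  have h_swap : ∫ ω, ℓ (W ω) (G ω (.inl i)) ∂P = ∫ ω, ℓ (Wᵢ ω) (Y ω) ∂P := by
    have := (hswap.comp (u := fun p => ℓ (A (fun j => p.1 (.inl j)) p.2) (p.1 (.inl i)))
      (by fun_prop)).integral_eq
    simpa only [Function.comp_def, comp_swap_inl_eq_update, Equiv.swap_apply_left] using this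
  have hloss := hY.integrable_comp_of_lipschitzWith hℓ hLip hℓ0 hW
  have hlossᵢ := hY.integrable_comp_of_lipschitzWith hℓ hLip hℓ0 hWᵢ
  calc ∫ ω, ∫ z, ℓ (W ω) z ∂μ ∂P - ∫ ω, ℓ (W ω) (G ω (.inl i)) ∂P
      = ∫ ω, (ℓ (W ω) (Y ω) - ℓ (Wᵢ ω) (Y ω)) ∂P := by
        rw [h_ghost, h_swap, integral_sub hloss hlossᵢ]
    _ ≤ ∫ ω, L * ‖W ω - Wᵢ ω‖ ∂P := by
        refine integral_mono (hloss.sub hlossᵢ) ((hW.sub hWᵢ).norm.const_mul _) fun ω => ?_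
        exact (le_abs_self _).trans ((hLip (Y ω)).norm_sub_le _ _)
    _ = L * ∫ ω, ‖W ω - Wᵢ ω‖ ∂P := integral_const_mul _ _

theorem integral_population_loss_sub_integral_empirical_loss_le [Nonempty ι]
    (hG : HasLaw G (Measure.pi fun _ => μ) P) (hGm : Measurable G) (hV : Measurable V)
    (hGV : G ⟂ᵢ[P] V) (hA : Measurable fun p : (ι → 𝒵) × 𝒱 => A p.1 p.2)
    (hW : Integrable (fun ω => A (fun j => G ω (.inl j)) (V ω)) P)
    (hℓ : Measurable fun p : E × 𝒵 => ℓ p.1 p.2) (hLip : ∀ z, LipschitzWith L (ℓ · z))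
    (hℓ0 : Integrable (ℓ 0) μ) :
    ∫ ω, ∫ z, ℓ (A (fun j => G ω (.inl j)) (V ω)) z ∂μ ∂P
        - ∫ ω, (Fintype.card ι : ℝ)⁻¹ * ∑ i, ℓ (A (fun j => G ω (.inl j)) (V ω)) (G ω (.inl i)) ∂P
      ≤ L / Fintype.card ι * ∑ i, ∫ ω, ‖A (fun j => G ω (.inl j)) (V ω)
          - A (Function.update (fun j => G ω (.inl j)) i (G ω (.inr i))) (V ω)‖ ∂P := by
  set W : Ω → E := fun ω => A (fun j => G ω (.inl j)) (V ω)
  have hemp (i : ι) : Integrable (fun ω => ℓ (W ω) (G ω (.inl i))) P :=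
    ((measurePreserving_eval _ (Sum.inl i)).comp_hasLaw hG).integrable_comp_of_lipschitzWith
      hℓ hLip hℓ0 hW
  have hcard : (Fintype.card ι : ℝ) ≠ 0 := Nat.cast_ne_zero.mpr Fintype.card_ne_zero
  calc ∫ ω, ∫ z, ℓ (W ω) z ∂μ ∂P - ∫ ω, (Fintype.card ι : ℝ)⁻¹ * ∑ i, ℓ (W ω) (G ω (.inl i)) ∂P
      = (Fintype.card ι : ℝ)⁻¹ * ∑ i,
          (∫ ω, ∫ z, ℓ (W ω) z ∂μ ∂P - ∫ ω, ℓ (W ω) (G ω (.inl i)) ∂P) := by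
        rw [integral_const_mul, integral_finsetSum _ fun i _ => hemp i, Finset.sum_sub_distrib,
          Finset.sum_const, Finset.card_univ, nsmul_eq_mul, mul_sub, inv_mul_cancel_left₀ hcard]
    _ ≤ (Fintype.card ι : ℝ)⁻¹ * ∑ i, L * ∫ ω, ‖W ω
          - A (Function.update (fun j => G ω (.inl j)) i (G ω (.inr i))) (V ω)‖ ∂P := by
        gcongr with i
        exact integral_population_loss_sub_integral_loss_le hG hGm hV hGV hA hW hℓ hLip hℓ0 i
    _ = _ := by rw [← Finset.mul_sum, div_eq_inv_mul, mul_assoc]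

end Stability

end ProbabilityTheory

theorem gen_le_replace_one_stability_general
    {d n : ℕ} (hn : 0 < n) {Ω 𝒵 𝒱 : Type*}
    [MeasureSpace Ω] [IsProbabilityMeasure (ℙ : Measure Ω)]
    [MeasurableSpace 𝒵] [MeasurableSpace 𝒱]
    (μ : Measure 𝒵) [IsProbabilityMeasure μ]
    (Z Z' : Fin n → Ω → 𝒵)
    (hZmeas : ∀ i, Measurable (Z i)) (hZ'meas : ∀ i, Measurable (Z' i))
    (hiid : iIndepFun
      (Sum.elim Z Z' : Fin n ⊕ Fin n → Ω → 𝒵) ℙ)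
    (hlaw : ∀ i, Measure.map (Z i) ℙ = μ) (hlaw' : ∀ i, Measure.map (Z' i) ℙ = μ)
    (V : Ω → 𝒱) (hVmeas : Measurable V)
    (hVindep : IndepFun (fun ω => (fun i => Z i ω, fun i => Z' i ω)) V ℙ)
    (A : (Fin n → 𝒵) → 𝒱 → EuclideanSpace ℝ (Fin d))
    (hA : Measurable (fun p : (Fin n → 𝒵) × 𝒱 => A p.1 p.2))
    (W : Ω → EuclideanSpace ℝ (Fin d))
    (hW : W = fun ω => A (fun i => Z i ω) (V ω))
    (hWint : Integrable W ℙ)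
    (ℓ : EuclideanSpace ℝ (Fin d) → 𝒵 → ℝ) (L : ℝ≥0)
    (hℓmeas : Measurable (fun p : EuclideanSpace ℝ (Fin d) × 𝒵 => ℓ p.1 p.2))
    (hLip : ∀ z, LipschitzWith L (fun w => ℓ w z))
    (hint_loss : ∀ w, Integrable (fun z => ℓ w z) μ) :
    (∫ ω, ∫ z, ℓ (W ω) z ∂μ ∂ℙ) - (∫ ω, (n : ℝ)⁻¹ * ∑ i, ℓ (W ω) (Z i ω) ∂ℙ)
      ≤ (2 * (L : ℝ) / n) * ∑ i : Fin n,
          ∫ ω, ‖A (fun j => Z j ω) (V ω)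
            - A (Function.update (fun j => Z j ω) i (Z' i ω)) (V ω)‖ ∂ℙ := by
  subst hW
  set G : Ω → Fin n ⊕ Fin n → 𝒵 := fun ω k => Sum.elim Z Z' k ω
  have hGm : Measurable G := measurable_pi_lambda _ fun k => k.casesOn hZmeas hZ'meas
  have hG : HasLaw G (Measure.pi fun _ => μ) ℙ :=
    hiid.hasLaw_pi fun k => k.casesOn (fun i => ⟨(hZmeas i).aemeasurable, hlaw i⟩)
      fun i => ⟨(hZ'meas i).aemeasurable, hlaw' i⟩
  have hGV : G ⟂ᵢ[ℙ] V := by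
    convert hVindep.comp (MeasurableEquiv.sumPiEquivProdPi fun _ => 𝒵).symm.measurable
      measurable_id using 1
    · ext ω (i | i) <;> rfl
    · rfl
  have : Nonempty (Fin n) := ⟨⟨0, hn⟩⟩
  have key := integral_population_loss_sub_integral_empirical_loss_le hG hGm hVmeas hGV hA
    hWint hℓmeas hLip (hint_loss 0)
  rw [Fintype.card_fin] at key
  refine key.trans (mul_le_mul_of_nonneg_right ?_
    (Finset.sum_nonneg fun i _ => integral_nonneg fun ω => norm_nonneg _))
  gcongr
  linarith

/-- Generalization bound via on-average replace-one stability: if the loss `ℓ(·, z)` is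
`L`-Lipschitz for every `z` and `W = A(S, V)` is the integrable output of a (possibly
randomized) algorithm with internal randomness `V` independent of the i.i.d. samples
`S, S'`, then `gen ≤ (2L/n) · Σ_i E[‖A(S, V) − A(S^{(i)}, V)‖]`, where `S^{(i)}` is `S`
with its `i`-th entry replaced by `Z'_i`. -/
theorem gen_le_replace_one_stability
    {d n : ℕ} (hn : 0 < n) {Ω 𝒵 𝒱 : Type*}
    [MeasureSpace Ω] [IsProbabilityMeasure (ℙ : Measure Ω)]
    [MeasurableSpace 𝒵] [StandardBorelSpace 𝒵] [MeasurableSpace 𝒱]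
    (μ : Measure 𝒵) [IsProbabilityMeasure μ]
    (Z Z' : Fin n → Ω → 𝒵)
    (hZmeas : ∀ i, Measurable (Z i)) (hZ'meas : ∀ i, Measurable (Z' i))
    (hiid : iIndepFun
      (Sum.elim Z Z' : Fin n ⊕ Fin n → Ω → 𝒵) ℙ)
    (hlaw : ∀ i, Measure.map (Z i) ℙ = μ) (hlaw' : ∀ i, Measure.map (Z' i) ℙ = μ)
    (V : Ω → 𝒱) (hVmeas : Measurable V)
    (hVindep : IndepFun (fun ω => (fun i => Z i ω, fun i => Z' i ω)) V ℙ)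
    (A : (Fin n → 𝒵) → 𝒱 → EuclideanSpace ℝ (Fin d))
    (hA : Measurable (fun p : (Fin n → 𝒵) × 𝒱 => A p.1 p.2))
    (W : Ω → EuclideanSpace ℝ (Fin d))
    (hW : W = fun ω => A (fun i => Z i ω) (V ω))
    (hWint : Integrable W ℙ)
    (ℓ : EuclideanSpace ℝ (Fin d) → 𝒵 → ℝ) (L : ℝ≥0)
    (hℓmeas : Measurable (fun p : EuclideanSpace ℝ (Fin d) × 𝒵 => ℓ p.1 p.2))
    (hLip : ∀ z, LipschitzWith L (fun w => ℓ w z))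
    (hint_emp : ∀ i, Integrable (fun ω => ℓ (W ω) (Z i ω)) ℙ)
    (hint_pop : Integrable (fun ω => ∫ z, ℓ (W ω) z ∂μ) ℙ)
    (hint_loss : ∀ w, Integrable (fun z => ℓ w z) μ)
    (hint_stab : ∀ i, Integrable (fun ω =>
      ‖A (fun j => Z j ω) (V ω)
        - A (Function.update (fun j => Z j ω) i (Z' i ω)) (V ω)‖) ℙ) :
    (∫ ω, ∫ z, ℓ (W ω) z ∂μ ∂ℙ) - (∫ ω, (n : ℝ)⁻¹ * ∑ i, ℓ (W ω) (Z i ω) ∂ℙ)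
      ≤ (2 * (L : ℝ) / n) * ∑ i : Fin n,
          ∫ ω, ‖A (fun j => Z j ω) (V ω)
            - A (Function.update (fun j => Z j ω) i (Z' i ω)) (V ω)‖ ∂ℙ :=
  gen_le_replace_one_stability_general hn μ Z Z' hZmeas hZ'meas hiid hlaw hlaw' V hVmeas hVindep A
    hA W hW hWint ℓ L hℓmeas hLip hint_loss
end

section
/- Assume that for every z ∈ Z the map w ↦ ℓ(w, z) is nonnegative, differentiable on ℝ^d and β-smooth (i.e. ‖∇ℓ(w, z) − ∇ℓ(w', z)‖ ≤ β‖w − w'‖ for all w, w'). Let W = A(S, V) ∈ ℝ^d be the square-integrable output of a (possibly randomized) learning algorithm with internal randomness V independent of S. Let S' = (Z'_1, …, Z'_n) be an independent i.i.d. copy of S and, for each i, let S^{(i)} denote S with its i-th sample replaced by Z'_i. Define the ℓ₂ on-average model stability ε_stab := E[(1/n) Σ_{i=1}^n ‖A(S, V) − A(S^{(i)}, V)‖²]. Then gen ≤ inf_{γ > β} (1/(1 − β/γ)) · ( (2β/γ) · E[L_S(W)] + ((β + γ)/2) · ε_stab ). -/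
open MeasureTheory ProbabilityTheory
open scoped ENNReal Gradient InnerProductSpace

/-!
Swapping `Z i` with the ghost sample `Z' i` preserves the joint law of `(S, S', V)`, so the
expected population loss of `W = A(S, V)` equals the expected loss of `W⁽ⁱ⁾ = A(S⁽ⁱ⁾, V)` at
`Z i`, a point it has not seen. For a nonnegative `β`-smooth loss `f`, the descent lemma, the
self-bounding property `‖∇f‖² ≤ 4βf` and Young's inequality give, for every `γ > β`,
`f w' ≤ (γ + β)/(γ - β) · f w + (β + γ)/2 · ‖w - w'‖²`. Applied with `w = W`, `w' = W⁽ⁱ⁾` at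
`Z i` and averaged over `i`, this bounds the population loss by the empirical loss and the
stability term.
-/

section Smooth

variable {F : Type*} [NormedAddCommGroup F] [InnerProductSpace ℝ F] [CompleteSpace F]
  {f : F → ℝ} {β : ℝ}

theorem le_add_inner_gradient_add_mul_norm_sq (hβ : 0 ≤ β) (hd : Differentiable ℝ f)
    (hL : ∀ u v, ‖∇ f u - ∇ f v‖ ≤ β * ‖u - v‖) (x y : F) :
    f y ≤ f x + ⟪∇ f x, y - x⟫_ℝ + β * ‖y - x‖ ^ 2 := by
  set c := ∇ f x
  let g : F → ℝ := fun w => f w - ⟪c, w⟫_ℝ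
  have hg : ∀ w, HasFDerivAt g (InnerProductSpace.toDual ℝ F (∇ f w - c)) w := fun w => by
    rw [map_sub]
    exact (hd w).hasGradientAt.hasFDerivAt.sub (innerSL ℝ c).hasFDerivAt
  have hbound : ∀ w ∈ Metric.closedBall x ‖y - x‖,
      ‖InnerProductSpace.toDual ℝ F (∇ f w - c)‖ ≤ β * ‖y - x‖ := fun w hw => by
    rw [LinearIsometryEquiv.norm_map]
    exact (hL w x).trans (mul_le_mul_of_nonneg_left (mem_closedBall_iff_norm.mp hw) hβ)
  -- the mean value inequality for `g` gives the constant `β` rather than the sharp `β / 2`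
  have hmvt := (convex_closedBall x ‖y - x‖).norm_image_sub_le_of_norm_hasFDerivWithin_le
    (fun w _ => (hg w).hasFDerivWithinAt) hbound (Metric.mem_closedBall_self (norm_nonneg _))
    (mem_closedBall_iff_norm.mpr le_rfl)
  have hgyx : g y - g x = f y - f x - ⟪c, y - x⟫_ℝ := by
    simp only [g, inner_sub_right]; ring
  rw [Real.norm_eq_abs, hgyx] at hmvt
  nlinarith [le_abs_self (f y - f x - ⟪c, y - x⟫_ℝ)]

theorem sq_norm_gradient_le_of_nonneg_s12 (hβ : 0 < β) (h0 : ∀ w, 0 ≤ f w) (hd : Differentiable ℝ f)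
    (hL : ∀ u v, ‖∇ f u - ∇ f v‖ ≤ β * ‖u - v‖) (x : F) :
    ‖∇ f x‖ ^ 2 ≤ 4 * β * f x := by
  -- `f ≥ 0` at the gradient step `x - (2β)⁻¹ ∇f x`
  have h := le_add_inner_gradient_add_mul_norm_sq hβ.le hd hL x (x - (2 * β)⁻¹ • ∇ f x)
  rw [sub_sub_cancel_left, inner_neg_right, real_inner_smul_right, real_inner_self_eq_norm_sq,
    norm_neg, norm_smul, Real.norm_of_nonneg (by positivity)] at h
  have hy := h0 (x - (2 * β)⁻¹ • ∇ f x)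
  generalize f (x - (2 * β)⁻¹ • ∇ f x) = fy at h hy
  field_simp at h
  nlinarith

theorem le_mul_add_mul_sq_norm_sub_of_nonneg {γ : ℝ} (hβ : 0 < β) (hγ : β < γ)
    (h0 : ∀ w, 0 ≤ f w) (hd : Differentiable ℝ f)
    (hL : ∀ u v, ‖∇ f u - ∇ f v‖ ≤ β * ‖u - v‖) (w w' : F) :
    f w' ≤ (γ + β) / (γ - β) * f w + (β + γ) / 2 * ‖w - w'‖ ^ 2 := by
  have hdesc := le_add_inner_gradient_add_mul_norm_sq hβ.le hd hL w w'
  have hgrad := sq_norm_gradient_le_of_nonneg_s12 hβ h0 hd hL w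
  have hcs := real_inner_le_norm (∇ f w) (w' - w)
  -- Young's inequality with weight `γ - β`
  have hyoung := two_mul_le_add_sq ‖∇ f w‖ ((γ - β) * ‖w' - w‖)
  rw [norm_sub_rev, div_mul_eq_mul_div, div_add' _ _ _ (by linarith), le_div_iff₀ (by linarith)]
  nlinarith

end Smooth

theorem ofReal_integral_le_lintegral_ofReal {α : Type*} [MeasurableSpace α] {μ : Measure α}
    {f : α → ℝ} (hf : 0 ≤ᵐ[μ] f) :
    ENNReal.ofReal (∫ a, f a ∂μ) ≤ ∫⁻ a, ENNReal.ofReal (f a) ∂μ := by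
  by_cases hi : Integrable f μ
  · exact (ofReal_integral_eq_lintegral_ofReal hi hf).le
  · simp [integral_undef hi]

theorem integral_le_integral_of_lintegral_ofReal_le {α : Type*} [MeasurableSpace α]
    {μ : Measure α} {f g : α → ℝ} (hf₀ : 0 ≤ᵐ[μ] f) (hf : AEStronglyMeasurable f μ)
    (hg₀ : 0 ≤ᵐ[μ] g) (hg : Integrable g μ)
    (h : ∫⁻ a, ENNReal.ofReal (f a) ∂μ ≤ ∫⁻ a, ENNReal.ofReal (g a) ∂μ) :
    ∫ a, f a ∂μ ≤ ∫ a, g a ∂μ := by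
  rw [integral_eq_lintegral_of_nonneg_ae hf₀ hf, integral_eq_lintegral_of_nonneg_ae hg₀ hg.1]
  exact ENNReal.toReal_mono hg.lintegral_lt_top.ne h

theorem lintegral_prod_prod_eq_lintegral_lintegral {α β γ : Type*} [MeasurableSpace α]
    [MeasurableSpace β] [MeasurableSpace γ] (a : Measure α) (b : Measure β) (c : Measure γ)
    [SFinite a] [IsProbabilityMeasure b] [SFinite c] {H : α → γ → β → ℝ≥0∞}
    (hH : Measurable fun p : (α × γ) × β => H p.1.1 p.1.2 p.2) :
    ∫⁻ q, H q.1.1 q.2 q.1.2 ∂((a.prod b).prod c)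
      = ∫⁻ q, ∫⁻ y, H q.1.1 q.2 y ∂b ∂((a.prod b).prod c) := by
  have hH₁ : Measurable fun q : (α × β) × γ => H q.1.1 q.2 q.1.2 :=
    hH.comp (by fun_prop : Measurable fun q : (α × β) × γ => ((q.1.1, q.2), q.1.2))
  have hH₂ : Measurable fun q : (α × γ) => ∫⁻ y, H q.1 q.2 y ∂b := hH.lintegral_prod_right'
  have hH₃ : Measurable fun q : (α × β) × γ => ∫⁻ y, H q.1.1 q.2 y ∂b :=
    hH₂.comp (by fun_prop : Measurable fun q : (α × β) × γ => (q.1.1, q.2))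
  rw [lintegral_prod _ hH₁.aemeasurable, lintegral_prod _ hH₃.aemeasurable,
    lintegral_prod _ hH₁.lintegral_prod_right'.aemeasurable,
    lintegral_prod _ hH₃.lintegral_prod_right'.aemeasurable]
  refine lintegral_congr fun x => ?_
  dsimp only
  rw [lintegral_const, measure_univ, mul_one, lintegral_lintegral_swap]
  exact (hH.comp (by fun_prop : Measurable fun q : β × γ => ((x, q.2), q.1))).aemeasurable

section GhostSample

variable {ι X 𝒱 Ω : Type*} [Fintype ι] [MeasurableSpace X] [MeasurableSpace 𝒱]
  [MeasurableSpace Ω] {P : Measure Ω}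

theorem measurePreserving_update_swap [DecidableEq ι] (μ : Measure X) [SigmaFinite μ] (i : ι) :
    MeasurePreserving
      (fun p : (ι → X) × (ι → X) => (Function.update p.1 i (p.2 i), Function.update p.2 i (p.1 i)))
      ((Measure.pi fun _ => μ).prod (Measure.pi fun _ => μ))
      ((Measure.pi fun _ => μ).prod (Measure.pi fun _ => μ)) := by
  have he := measurePreserving_arrowProdEquivProdArrow X X ι (fun _ => μ) (fun _ => μ)
  have hswap := measurePreserving_pi (fun _ : ι => μ.prod μ) (fun _ => μ.prod μ)
    (f := fun j => if j = i then Prod.swap else id) fun j => by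
      split_ifs
      exacts [Measure.measurePreserving_swap, MeasurePreserving.id _]
  convert he.comp (hswap.comp he.symm) using 1
  ext p j <;> by_cases hj : j = i <;>
    simp [hj, MeasurableEquiv.arrowProdEquivProdArrow, Equiv.arrowProdEquivProdArrow]

theorem map_samples_prod_eq_pi_prod_pi [IsProbabilityMeasure P] {μ : Measure X} [SigmaFinite μ]
    {Z Z' : ι → Ω → X} {V : Ω → 𝒱} (hZ : ∀ i, Measurable (Z i)) (hZ' : ∀ i, Measurable (Z' i))
    (hV : Measurable V) (hiid : iIndepFun (Sum.elim Z Z') P)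
    (hlaw : ∀ i, P.map (Z i) = μ) (hlaw' : ∀ i, P.map (Z' i) = μ)
    (hVindep : IndepFun (fun ω => (fun i => Z i ω, fun i => Z' i ω)) V P) :
    P.map (fun ω => ((fun i => Z i ω, fun i => Z' i ω), V ω))
      = ((Measure.pi fun _ => μ).prod (Measure.pi fun _ => μ)).prod (P.map V) := by
  have hmeas : ∀ j, Measurable (Sum.elim Z Z' j) := Sum.rec hZ hZ'
  have hsum : P.map (fun ω j => Sum.elim Z Z' j ω) = Measure.pi fun _ => μ := by
    rw [hiid.map_fun_eq_pi_map fun j => (hmeas j).aemeasurable]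
    congr with j : 1
    cases j
    exacts [hlaw _, hlaw' _]
  have hpair : P.map (fun ω => (fun i => Z i ω, fun i => Z' i ω))
      = (Measure.pi fun _ => μ).prod (Measure.pi fun _ => μ) := by
    rw [← (measurePreserving_sumPiEquivProdPi fun _ : ι ⊕ ι => μ).map_eq, ← hsum,
      Measure.map_map (MeasurableEquiv.measurable _) (measurable_pi_lambda _ hmeas)]
    rfl
  rw [(indepFun_iff_map_prod_eq_prod_map_map (by fun_prop) hV.aemeasurable).mp hVindep, hpair]

theorem lintegral_update_eq_lintegral_lintegral [DecidableEq ι] {μ : Measure X}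
    [IsProbabilityMeasure μ] {ν : Measure 𝒱} [SFinite ν] {S S' : Ω → ι → X} {V : Ω → 𝒱}
    (hS : Measurable S) (hS' : Measurable S') (hV : Measurable V)
    (hjoint : P.map (fun ω => ((S ω, S' ω), V ω))
      = ((Measure.pi fun _ => μ).prod (Measure.pi fun _ => μ)).prod ν)
    {g : (ι → X) → 𝒱 → X → ℝ≥0∞} (hg : Measurable fun p : ((ι → X) × 𝒱) × X => g p.1.1 p.1.2 p.2)
    (i : ι) :
    ∫⁻ ω, g (Function.update (S ω) i (S' ω i)) (V ω) (S ω i) ∂P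
      = ∫⁻ ω, ∫⁻ z, g (S ω) (V ω) z ∂μ ∂P := by
  set τ := ((Measure.pi fun _ : ι => μ).prod (Measure.pi fun _ : ι => μ)).prod ν
  have hSV : Measurable fun ω => ((S ω, S' ω), V ω) := by fun_prop
  have hg₁ : Measurable fun q : ((ι → X) × (ι → X)) × 𝒱 => g q.1.1 q.2 (q.1.2 i) :=
    hg.comp (by fun_prop : Measurable fun q : ((ι → X) × (ι → X)) × 𝒱 => ((q.1.1, q.2), q.1.2 i))
  have hg₂ : Measurable fun q : ((ι → X) × (ι → X)) × 𝒱 => ∫⁻ z, g q.1.1 q.2 z ∂μ :=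
    (hg.lintegral_prod_right').comp
      (by fun_prop : Measurable fun q : ((ι → X) × (ι → X)) × 𝒱 => (q.1.1, q.2))
  have hswap := (measurePreserving_update_swap μ i).prod (MeasurePreserving.id ν)
  have hg₃ : Measurable fun q : ((ι → X) × (ι → X)) × 𝒱 =>
      g (Function.update q.1.1 i (q.1.2 i)) q.2 (Function.update q.1.2 i (q.1.1 i) i) :=
    hg₁.comp hswap.measurable
  calc ∫⁻ ω, g (Function.update (S ω) i (S' ω i)) (V ω) (S ω i) ∂P
      = ∫⁻ q, g (Function.update q.1.1 i (q.1.2 i)) q.2 (Function.update q.1.2 i (q.1.1 i) i)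
          ∂τ := by
        rw [← hjoint, lintegral_map hg₃ hSV]
        simp only [Function.update_self]
    _ = ∫⁻ q, g q.1.1 q.2 (q.1.2 i) ∂τ := hswap.lintegral_comp hg₁
    _ = ∫⁻ q, ∫⁻ s, g q.1.1 q.2 (s i) ∂(Measure.pi fun _ => μ) ∂τ :=
        lintegral_prod_prod_eq_lintegral_lintegral (H := fun s v (s' : ι → X) => g s v (s' i))
          _ _ _ (hg.comp (by fun_prop : Measurable fun p : ((ι → X) × 𝒱) × (ι → X) =>
            ((p.1.1, p.1.2), p.2 i)))
    _ = ∫⁻ q, ∫⁻ z, g q.1.1 q.2 z ∂μ ∂τ :=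
        lintegral_congr fun q => (measurePreserving_eval _ i).lintegral_comp
          (hg.comp (measurable_prodMk_left (x := (q.1.1, q.2))))
    _ = ∫⁻ ω, ∫⁻ z, g (S ω) (V ω) z ∂μ ∂P := by
        rw [← hjoint, lintegral_map hg₂ hSV]

theorem integral_integral_le_integral_of_update_le [DecidableEq ι] {μ : Measure X}
    [IsProbabilityMeasure μ] {ν : Measure 𝒱} [SFinite ν] {S S' : Ω → ι → X} {V : Ω → 𝒱}
    (hS : Measurable S) (hS' : Measurable S') (hV : Measurable V)
    (hjoint : P.map (fun ω => ((S ω, S' ω), V ω))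
      = ((Measure.pi fun _ => μ).prod (Measure.pi fun _ => μ)).prod ν)
    {f : (ι → X) → 𝒱 → X → ℝ} (hf : Measurable fun p : ((ι → X) × 𝒱) × X => f p.1.1 p.1.2 p.2)
    (hf₀ : ∀ s v z, 0 ≤ f s v z)
    (hpop : AEStronglyMeasurable (fun ω => ∫ z, f (S ω) (V ω) z ∂μ) P)
    {G : Ω → ℝ} (hG : Integrable G P) (i : ι)
    (hle : ∀ ω, f (Function.update (S ω) i (S' ω i)) (V ω) (S ω i) ≤ G ω) :
    ∫ ω, ∫ z, f (S ω) (V ω) z ∂μ ∂P ≤ ∫ ω, G ω ∂P := by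
  refine integral_le_integral_of_lintegral_ofReal_le
    (ae_of_all _ fun ω => integral_nonneg (hf₀ _ _)) hpop
    (ae_of_all _ fun ω => (hf₀ _ _ _).trans (hle ω)) hG ?_
  calc ∫⁻ ω, ENNReal.ofReal (∫ z, f (S ω) (V ω) z ∂μ) ∂P
      ≤ ∫⁻ ω, ∫⁻ z, ENNReal.ofReal (f (S ω) (V ω) z) ∂μ ∂P :=
        lintegral_mono fun ω => ofReal_integral_le_lintegral_ofReal (ae_of_all _ (hf₀ _ _))
    _ = ∫⁻ ω, ENNReal.ofReal (f (Function.update (S ω) i (S' ω i)) (V ω) (S ω i)) ∂P :=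
        (lintegral_update_eq_lintegral_lintegral (g := fun s v z => ENNReal.ofReal (f s v z))
          hS hS' hV hjoint (ENNReal.measurable_ofReal.comp hf) i).symm
    _ ≤ ∫⁻ ω, ENNReal.ofReal (G ω) ∂P :=
        lintegral_mono fun ω => ENNReal.ofReal_le_ofReal (hle ω)

end GhostSample

theorem le_inv_mul_sum_of_forall_le {n : ℕ} (hn : 0 < n) {x : ℝ} {y : Fin n → ℝ}
    (h : ∀ i, x ≤ y i) : x ≤ (n : ℝ)⁻¹ * ∑ i, y i := by
  have := Finset.card_nsmul_le_sum Finset.univ y x fun i _ => h i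
  rw [Finset.card_univ, Fintype.card_fin, nsmul_eq_mul] at this
  rw [le_inv_mul_iff₀ (by exact_mod_cast hn)]
  exact this

theorem sub_le_of_le_mul_add_mul {β γ P a b : ℝ} (hβ : 0 < β) (hγ : β < γ) (hb : 0 ≤ b)
    (h : P ≤ (γ + β) / (γ - β) * a + (β + γ) / 2 * b) :
    P - a ≤ 1 / (1 - β / γ) * (2 * β / γ * a + (β + γ) / 2 * b) := by
  have hγ₀ : 0 < γ := by linarith
  have hγβ : 0 < γ - β := by linarith
  have hfac : 1 / (1 - β / γ) = γ / (γ - β) := by field_simp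
  have hstab : (β + γ) / 2 * b ≤ γ / (γ - β) * ((β + γ) / 2 * b) := by
    refine le_mul_of_one_le_left (mul_nonneg (by positivity) hb) ?_
    rw [le_div_iff₀ hγβ]; linarith
  calc P - a ≤ 2 * β / (γ - β) * a + (β + γ) / 2 * b := by
        convert sub_le_sub_right h a using 1; field_simp; ring
    _ ≤ 2 * β / (γ - β) * a + γ / (γ - β) * ((β + γ) / 2 * b) := by gcongr
    _ = 1 / (1 - β / γ) * (2 * β / γ * a + (β + γ) / 2 * b) := by
        rw [hfac]; field_simp

theorem gen_le_on_average_model_stability_general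
    {d n : ℕ} (hn : 0 < n) {Ω 𝒵 𝒱 : Type*}
    [MeasureSpace Ω] [IsProbabilityMeasure (ℙ : Measure Ω)]
    [MeasurableSpace 𝒵] [MeasurableSpace 𝒱]
    (μ : Measure 𝒵) [IsProbabilityMeasure μ]
    (Z Z' : Fin n → Ω → 𝒵)
    (hZmeas : ∀ i, Measurable (Z i)) (hZ'meas : ∀ i, Measurable (Z' i))
    (hiid : iIndepFun
      (Sum.elim Z Z' : Fin n ⊕ Fin n → Ω → 𝒵) ℙ)
    (hlaw : ∀ i, Measure.map (Z i) ℙ = μ) (hlaw' : ∀ i, Measure.map (Z' i) ℙ = μ)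
    (V : Ω → 𝒱) (hVmeas : Measurable V)
    (hVindep : IndepFun (fun ω => (fun i => Z i ω, fun i => Z' i ω)) V ℙ)
    (ℓ : EuclideanSpace ℝ (Fin d) → 𝒵 → ℝ) (β : ℝ) (hβ : 0 < β)
    (hℓmeas : Measurable (fun p : EuclideanSpace ℝ (Fin d) × 𝒵 => ℓ p.1 p.2))
    (hnonneg : ∀ z w, 0 ≤ ℓ w z)
    (hdiff : ∀ z, Differentiable ℝ (fun w => ℓ w z))
    (hsmooth : ∀ z, ∀ w w' : EuclideanSpace ℝ (Fin d),
      ‖gradient (fun w => ℓ w z) w - gradient (fun w => ℓ w z) w'‖ ≤ β * ‖w - w'‖)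
    (A : (Fin n → 𝒵) → 𝒱 → EuclideanSpace ℝ (Fin d))
    (hA : Measurable (fun p : (Fin n → 𝒵) × 𝒱 => A p.1 p.2))
    (W : Ω → EuclideanSpace ℝ (Fin d))
    (hW : W = fun ω => A (fun i => Z i ω) (V ω))
    (hint_emp : ∀ i, Integrable (fun ω => ℓ (W ω) (Z i ω)) ℙ)
    (hint_pop : Integrable (fun ω => ∫ z, ℓ (W ω) z ∂μ) ℙ)
    (hint_stab : ∀ i, Integrable (fun ω =>
      ‖A (fun j => Z j ω) (V ω)
        - A (Function.update (fun j => Z j ω) i (Z' i ω)) (V ω)‖ ^ 2) ℙ) :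
    (∫ ω, ∫ z, ℓ (W ω) z ∂μ ∂ℙ) - (∫ ω, (n : ℝ)⁻¹ * ∑ i, ℓ (W ω) (Z i ω) ∂ℙ)
      ≤ ⨅ γ : {γ : ℝ // β < γ},
          (1 / (1 - β / γ.1)) *
            ((2 * β / γ.1) * (∫ ω, (n : ℝ)⁻¹ * ∑ i, ℓ (W ω) (Z i ω) ∂ℙ)
              + ((β + γ.1) / 2) *
                  ∫ ω, (n : ℝ)⁻¹ * ∑ i : Fin n,
                    ‖A (fun j => Z j ω) (V ω)
                      - A (Function.update (fun j => Z j ω) i (Z' i ω)) (V ω)‖ ^ 2 ∂ℙ) := by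
  subst hW
  have hjoint := map_samples_prod_eq_pi_prod_pi hZmeas hZ'meas hVmeas hiid hlaw hlaw' hVindep
  have hloss : Measurable fun p : ((Fin n → 𝒵) × 𝒱) × 𝒵 => ℓ (A p.1.1 p.1.2) p.2 :=
    hℓmeas.comp ((hA.comp measurable_fst).prodMk measurable_snd)
  have : Nonempty {γ : ℝ // β < γ} := ⟨⟨β + 1, by linarith⟩⟩
  refine le_ciInf fun ⟨γ, hγ⟩ => ?_
  have hpop : ∀ i, ∫ ω, ∫ z, ℓ (A (fun j => Z j ω) (V ω)) z ∂μ ∂ℙ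
      ≤ (γ + β) / (γ - β) * ∫ ω, ℓ (A (fun j => Z j ω) (V ω)) (Z i ω) ∂ℙ
        + (β + γ) / 2 * ∫ ω, ‖A (fun j => Z j ω) (V ω)
            - A (Function.update (fun j => Z j ω) i (Z' i ω)) (V ω)‖ ^ 2 ∂ℙ := fun i => by
    have hemp := (hint_emp i).const_mul ((γ + β) / (γ - β))
    have hstab := (hint_stab i).const_mul ((β + γ) / 2)
    rw [← integral_const_mul, ← integral_const_mul, ← integral_add hemp hstab]
    exact integral_integral_le_integral_of_update_le (S := fun ω j => Z j ω)
      (S' := fun ω j => Z' j ω) (f := fun s v z => ℓ (A s v) z) (by fun_prop) (by fun_prop)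
      hVmeas hjoint hloss (fun _ _ _ => hnonneg _ _) hint_pop.1 (hemp.add hstab) i fun ω =>
        le_mul_add_mul_sq_norm_sub_of_nonneg hβ hγ (hnonneg (Z i ω)) (hdiff (Z i ω))
          (hsmooth (Z i ω)) _ _
  rw [integral_const_mul, integral_finsetSum _ fun i _ => hint_emp i, integral_const_mul,
    integral_finsetSum _ fun i _ => hint_stab i]
  refine sub_le_of_le_mul_add_mul hβ hγ
    (mul_nonneg (by positivity)
      (Finset.sum_nonneg fun i _ => integral_nonneg fun ω => by positivity))
    ((le_inv_mul_sum_of_forall_le hn hpop).trans_eq ?_)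
  rw [Finset.sum_add_distrib, ← Finset.mul_sum, ← Finset.mul_sum]
  ring

/-- Generalization via ℓ₂ on-average model stability for nonnegative, differentiable,
`β`-smooth losses:
`gen ≤ inf_{γ > β} (1/(1 − β/γ))·((2β/γ)·E[L_S(W)] + ((β + γ)/2)·ε_stab)`,
where `ε_stab := E[(1/n)Σ_i ‖A(S, V) − A(S^{(i)}, V)‖²]` and `S^{(i)}` is `S` with its
`i`-th sample replaced by `Z'_i`. -/
theorem gen_le_on_average_model_stability
    {d n : ℕ} (hn : 0 < n) {Ω 𝒵 𝒱 : Type*}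
    [MeasureSpace Ω] [IsProbabilityMeasure (ℙ : Measure Ω)]
    [MeasurableSpace 𝒵] [StandardBorelSpace 𝒵] [MeasurableSpace 𝒱]
    (μ : Measure 𝒵) [IsProbabilityMeasure μ]
    (Z Z' : Fin n → Ω → 𝒵)
    (hZmeas : ∀ i, Measurable (Z i)) (hZ'meas : ∀ i, Measurable (Z' i))
    (hiid : iIndepFun
      (Sum.elim Z Z' : Fin n ⊕ Fin n → Ω → 𝒵) ℙ)
    (hlaw : ∀ i, Measure.map (Z i) ℙ = μ) (hlaw' : ∀ i, Measure.map (Z' i) ℙ = μ)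
    (V : Ω → 𝒱) (hVmeas : Measurable V)
    (hVindep : IndepFun (fun ω => (fun i => Z i ω, fun i => Z' i ω)) V ℙ)
    (ℓ : EuclideanSpace ℝ (Fin d) → 𝒵 → ℝ) (β : ℝ) (hβ : 0 < β)
    (hℓmeas : Measurable (fun p : EuclideanSpace ℝ (Fin d) × 𝒵 => ℓ p.1 p.2))
    (hnonneg : ∀ z w, 0 ≤ ℓ w z)
    (hdiff : ∀ z, Differentiable ℝ (fun w => ℓ w z))
    (hsmooth : ∀ z, ∀ w w' : EuclideanSpace ℝ (Fin d),
      ‖gradient (fun w => ℓ w z) w - gradient (fun w => ℓ w z) w'‖ ≤ β * ‖w - w'‖)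
    (A : (Fin n → 𝒵) → 𝒱 → EuclideanSpace ℝ (Fin d))
    (hA : Measurable (fun p : (Fin n → 𝒵) × 𝒱 => A p.1 p.2))
    (W : Ω → EuclideanSpace ℝ (Fin d))
    (hW : W = fun ω => A (fun i => Z i ω) (V ω))
    (hW2 : MemLp W 2 ℙ)
    (hint_emp : ∀ i, Integrable (fun ω => ℓ (W ω) (Z i ω)) ℙ)
    (hint_pop : Integrable (fun ω => ∫ z, ℓ (W ω) z ∂μ) ℙ)
    (hint_loss : ∀ w, Integrable (fun z => ℓ w z) μ)
    (hint_stab : ∀ i, Integrable (fun ω =>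
      ‖A (fun j => Z j ω) (V ω)
        - A (Function.update (fun j => Z j ω) i (Z' i ω)) (V ω)‖ ^ 2) ℙ) :
    (∫ ω, ∫ z, ℓ (W ω) z ∂μ ∂ℙ) - (∫ ω, (n : ℝ)⁻¹ * ∑ i, ℓ (W ω) (Z i ω) ∂ℙ)
      ≤ ⨅ γ : {γ : ℝ // β < γ},
          (1 / (1 - β / γ.1)) *
            ((2 * β / γ.1) * (∫ ω, (n : ℝ)⁻¹ * ∑ i, ℓ (W ω) (Z i ω) ∂ℙ)
              + ((β + γ.1) / 2) *
                  ∫ ω, (n : ℝ)⁻¹ * ∑ i : Fin n,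
                    ‖A (fun j => Z j ω) (V ω)
                      - A (Function.update (fun j => Z j ω) i (Z' i ω)) (V ω)‖ ^ 2 ∂ℙ) :=
  gen_le_on_average_model_stability_general hn μ Z Z' hZmeas hZ'meas hiid hlaw hlaw' V hVmeas
    hVindep ℓ β hβ hℓmeas hnonneg hdiff hsmooth A hA W hW hint_emp hint_pop hint_stab
end
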